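/- Let α be a type, c a closure operator on Set α, F a flock, and A ∈ α a proposition not appearing in F (A ∉ ⋃₀ F). Let F + A = {Δ ∪ {A} | Δ ∈ F} be the expansion of the flock. Then the pure expansion of the epistemic state generated by F with respect to A is isomorphic to the epistemic state generated by F + A: the map (Γ, X) ↦ Γ ∪ X is a bijection from F↓ × {X | X ⊆ {A}} onto (F + A)↓, it preserves labels, i.e. c (c Γ ∪ c X) = c (Γ ∪ X), and it is an order isomorphism: Γ ∪ X ⊆ Γ' ∪ X' ↔ (Γ ⊆ Γ' ∧ X ⊆ X'). -/

import Mathlib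

/-- The epistemic state generated by a flock `F`: its admissible belief states. -/
def flockDown {α : Type*} (F : Set (Set α)) : Set (Set α) :=
  {Γ : Set α | ∃ Δ ∈ F, Γ ⊆ Δ}

/-- The expansion of a flock `F` by a proposition `A`: add `A` to every base. -/
def flockExpand {α : Type*} (F : Set (Set α)) (A : α) : Set (Set α) :=
  {Θ : Set α | ∃ Δ ∈ F, Θ = Δ ∪ {A}}

/-!
Since `A` occurs in no base, every state `Γ ∈ F↓` is disjoint from every `X ⊆ {A}`. In a
distributive lattice, joins of such cross-disjoint pairs compare componentwise, which gives the
order isomorphism and hence injectivity; a state `Θ` of `(F + A)↓` splits as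
`(Θ \ {A}) ∪ (Θ ∩ {A})`; and labels are preserved because `c (c x ⊔ c y) = c (x ⊔ y)` holds for
any closure operator.
-/

theorem sup_le_sup_iff_of_disjoint {L : Type*} [DistribLattice L] [OrderBot L] {a b a' b' : L}
    (ha : Disjoint a b') (hb : Disjoint b a') : a ⊔ b ≤ a' ⊔ b' ↔ a ≤ a' ∧ b ≤ b' :=
  ⟨fun h => ⟨Disjoint.left_le_of_le_sup_right (le_sup_left.trans h) ha,
      Disjoint.left_le_of_le_sup_left (le_sup_right.trans h) hb⟩,
    fun h => sup_le_sup h.1 h.2⟩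

section Flock

variable {α : Type*} {F : Set (Set α)} {A : α} {Γ X Θ : Set α}

theorem disjoint_of_mem_flockDown (hA : A ∉ ⋃₀ F) (hΓ : Γ ∈ flockDown F) (hX : X ⊆ {A}) :
    Disjoint Γ X := by
  obtain ⟨Δ, hΔ, hΓΔ⟩ := hΓ
  exact Set.disjoint_of_subset_right hX
    (Set.disjoint_singleton_right.2 fun hAΓ => hA ⟨Δ, hΔ, hΓΔ hAΓ⟩)

theorem union_mem_flockDown_flockExpand (hΓ : Γ ∈ flockDown F) (hX : X ⊆ {A}) :
    Γ ∪ X ∈ flockDown (flockExpand F A) := by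
  obtain ⟨Δ, hΔ, hΓΔ⟩ := hΓ
  exact ⟨Δ ∪ {A}, ⟨Δ, hΔ, rfl⟩, Set.union_subset_union hΓΔ hX⟩

theorem diff_singleton_mem_flockDown (hΘ : Θ ∈ flockDown (flockExpand F A)) :
    Θ \ {A} ∈ flockDown F := by
  obtain ⟨_, ⟨Δ, hΔ, rfl⟩, hΘΔ⟩ := hΘ
  exact ⟨Δ, hΔ, Set.sdiff_subset_iff.2 (hΘΔ.trans (Set.union_comm _ _).le)⟩

end Flock

/-- For a flock `F` and a proposition `A` not appearing in `F`, the pure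
expansion of the epistemic state generated by `F` with respect to `A` is isomorphic to
the epistemic state generated by the expanded flock `F + A`: the map `(Γ, X) ↦ Γ ∪ X`
is a bijection from `F↓ × {X | X ⊆ {A}}` onto `(F + A)↓`, preserves labels, and is an
order isomorphism. -/
theorem flock_expansion_iso (α : Type*) (c : ClosureOperator (Set α))
    (F : Set (Set α)) (A : α) (hA : A ∉ ⋃₀ F) :
    Set.BijOn (fun p : Set α × Set α => p.1 ∪ p.2)
        (flockDown F ×ˢ {X : Set α | X ⊆ {A}})
        (flockDown (flockExpand F A)) ∧
    (∀ Γ X : Set α, Γ ∈ flockDown F → X ⊆ {A} → c (c Γ ∪ c X) = c (Γ ∪ X)) ∧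
    (∀ Γ Γ' X X' : Set α, Γ ∈ flockDown F → Γ' ∈ flockDown F → X ⊆ {A} → X' ⊆ {A} →
      (Γ ∪ X ⊆ Γ' ∪ X' ↔ Γ ⊆ Γ' ∧ X ⊆ X')) := by
  have order_iso : ∀ Γ Γ' X X' : Set α, Γ ∈ flockDown F → Γ' ∈ flockDown F → X ⊆ {A} →
      X' ⊆ {A} → (Γ ∪ X ⊆ Γ' ∪ X' ↔ Γ ⊆ Γ' ∧ X ⊆ X') := fun Γ Γ' X X' hΓ hΓ' hX hX' =>
    sup_le_sup_iff_of_disjoint (disjoint_of_mem_flockDown hA hΓ hX')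
      (disjoint_of_mem_flockDown hA hΓ' hX).symm
  refine ⟨⟨?_, ?_, ?_⟩, fun Γ X _ _ => c.closure_sup_closure Γ X, order_iso⟩
  · rintro ⟨Γ, X⟩ ⟨hΓ, hX⟩
    exact union_mem_flockDown_flockExpand hΓ hX
  · rintro ⟨Γ, X⟩ ⟨hΓ, hX⟩ ⟨Γ', X'⟩ ⟨hΓ', hX'⟩ h
    obtain ⟨hΓΓ', hXX'⟩ := (order_iso Γ Γ' X X' hΓ hΓ' hX hX').1 h.le
    obtain ⟨hΓ'Γ, hX'X⟩ := (order_iso Γ' Γ X' X hΓ' hΓ hX' hX).1 h.ge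
    exact Prod.ext (hΓΓ'.antisymm hΓ'Γ) (hXX'.antisymm hX'X)
  · intro Θ hΘ
    exact ⟨(Θ \ {A}, Θ ∩ {A}), ⟨diff_singleton_mem_flockDown hΘ, Set.inter_subset_right⟩,
      Set.sdiff_union_inter Θ {A}⟩
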